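/- Let λ ∈ X be a dominant integral weight and let w ∈ W have reduced word w = s_{i_1}⋯s_{i_k}. Then the convex hull in V of the support of the Demazure character D_{i_1}⋯D_{i_k}(e^λ) equals the convex hull of {uλ : u ∈ W, u ≤ w}. -/

import Mathlib

open scoped Classical

/-- Data of a root system with a fixed choice of simple roots: an ambient
`ℚ`-vector space `V`, a set of roots `Φ` with a distinguished subset `pos` of
positive roots, a coroot functional `coroot β = ⟨·, β^∨⟩` for each root, and
simple roots `α 1, …, α r`. -/
structure RootData where
  r : ℕ
  V : Type
  [grp : AddCommGroup V]
  [mod : Module ℚ V]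
  Φ : Set V
  pos : Set V
  coroot : V → Module.Dual ℚ V
  α : Fin r → V

attribute [instance] RootData.grp RootData.mod

namespace RootData

variable (R : RootData)

/-- The group of linear automorphisms of `V`, in which the Weyl group lives. -/
abbrev Aut : Type := R.V ≃ₗ[ℚ] R.V

/-- The linear map `v ↦ v - ⟨v, β^∨⟩ β`. -/
noncomputable def reflMap (β : R.V) : R.V →ₗ[ℚ] R.V :=
  LinearMap.id - (R.coroot β).smulRight β

/-- The reflection `s_β` associated to a root `β`, as a linear automorphism. -/
noncomputable def s (β : R.V) : R.Aut :=
  if h : (R.reflMap β).comp (R.reflMap β) = LinearMap.id then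
    LinearEquiv.ofLinear (R.reflMap β) (R.reflMap β) h h
  else LinearEquiv.refl ℚ R.V

/-- The simple reflections `s_i := s_{α_i}`. -/
noncomputable def S (i : Fin R.r) : R.Aut := R.s (R.α i)

/-- The Weyl group `W`, generated by the simple reflections. -/
noncomputable def weylGroup : Subgroup R.Aut := Subgroup.closure (Set.range R.S)

/-- The product `s_{i_1} ⋯ s_{i_k}` of a word in the simple reflections. -/
noncomputable def wordProd (l : List (Fin R.r)) : R.Aut := (l.map R.S).prod

/-- The length function on `W`: least length of a word in the simple
reflections expressing the given element. -/
noncomputable def len (w : R.Aut) : ℕ :=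
  sInf {n | ∃ l : List (Fin R.r), l.length = n ∧ R.wordProd l = w}

/-- A word is reduced if its length equals the length of its product. -/
def Reduced (l : List (Fin R.r)) : Prop := R.len (R.wordProd l) = l.length

/-- The Bruhat order on `W`: `u ≤ w` iff some reduced word for `w` has a
subword whose product is `u`. -/
def BruhatLE (u w : R.Aut) : Prop :=
  ∃ l : List (Fin R.r), R.Reduced l ∧ R.wordProd l = w ∧
    ∃ l' : List (Fin R.r), l'.Sublist l ∧ R.wordProd l' = u

/-- Strict Bruhat order. -/
def BruhatLT (u w : R.Aut) : Prop := R.BruhatLE u w ∧ u ≠ w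

/-- One step of the Demazure product: `s_i * w := max {w, s_i w}`. -/
noncomputable def dmulStep (i : Fin R.r) (x : R.Aut) : R.Aut :=
  if R.len x < R.len (R.S i * x) then R.S i * x else x

/-- Demazure product of a word in the simple reflections against `w`:
`s_{i_1} * (s_{i_2} * (⋯ * (s_{i_k} * w)))`. -/
noncomputable def dmulList (l : List (Fin R.r)) (w : R.Aut) : R.Aut :=
  l.foldr R.dmulStep w

/-- The Demazure product `v * w` on the Weyl group, computed by choosing a
reduced word for `v` (it is independent of this choice). -/
noncomputable def dmul (v w : R.Aut) : R.Aut :=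
  if h : ∃ l : List (Fin R.r), R.Reduced l ∧ R.wordProd l = v then
    R.dmulList h.choose w
  else v * w

/-- The parabolic subgroup `W_{P_i}` generated by the simple reflections
`s_j`, `j ≠ i`. -/
noncomputable def WPar (i : Fin R.r) : Subgroup R.Aut :=
  Subgroup.closure (R.S '' {j | j ≠ i})

/-- `W^{P_i}`: the set of minimal-length representatives of cosets of
`W/W_{P_i}`. -/
def minReps (i : Fin R.r) : Set R.Aut :=
  {v | v ∈ R.weylGroup ∧ ∀ p ∈ R.WPar i, R.len v ≤ R.len (v * p)}

/-- `u` is the minimal-length representative of the coset `w W_{P_i}`. -/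
def IsMinRep (i : Fin R.r) (u w : R.Aut) : Prop :=
  u ∈ R.minReps i ∧ u⁻¹ * w ∈ R.WPar i

/-- A weight is dominant if it pairs nonnegatively with every simple coroot. -/
def Dominant (lam : R.V) : Prop := ∀ i : Fin R.r, 0 ≤ R.coroot (R.α i) lam

/-- The dual action of the Weyl group on `V* `: `(u f)(v) = f(u⁻¹ v)`. -/
noncomputable def dualAct (u : R.Aut) (f : Module.Dual ℚ R.V) : Module.Dual ℚ R.V :=
  f.comp (u.symm : R.V →ₗ[ℚ] R.V)

/-- The Demazure polytope `P_λ^w := conv {uλ : u ∈ W, u ≤ w}`. -/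
noncomputable def demPolytope (lam : R.V) (w : R.Aut) : Set R.V :=
  convexHull ℚ {m | ∃ u : R.Aut, u ∈ R.weylGroup ∧ R.BruhatLE u w ∧ m = u lam}

/-- Membership in the weight lattice `X`. -/
def IsWeight (lam : R.V) : Prop := ∀ β ∈ R.Φ, ∃ m : ℤ, R.coroot β lam = (m : ℚ)

/-- The root lattice `Q = ℤΦ`. -/
noncomputable def rootLattice : AddSubgroup R.V := AddSubgroup.closure R.Φ

/-- `w₀` is the longest element of the Weyl group. -/
def IsLongest (w₀ : R.Aut) : Prop :=
  w₀ ∈ R.weylGroup ∧ ∀ g ∈ R.weylGroup, R.len g ≤ R.len w₀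

/-- The positive roots `Φ_{P_i}⁺ = Φ⁺ ∩ span {α_j : j ≠ i}` of the standard
Levi subsystem. -/
def parPos (i : Fin R.r) : Set R.V :=
  {η | η ∈ R.pos ∧ η ∈ Submodule.span ℚ (R.α '' {j | j ≠ i})}

/-- The value `D_i (e^λ)` of the Demazure operator on a basis element of the
group ring `ℤ[X]`. -/
noncomputable def demOnBasis (i : Fin R.r) (lam : R.V) : R.V →₀ ℤ :=
  if 0 ≤ ⌊R.coroot (R.α i) lam⌋ then
    ∑ k ∈ Finset.range (⌊R.coroot (R.α i) lam⌋.toNat + 1),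
      Finsupp.single (lam - (k : ℚ) • R.α i) 1
  else if ⌊R.coroot (R.α i) lam⌋ = -1 then 0
  else - ∑ k ∈ Finset.range ((-⌊R.coroot (R.α i) lam⌋).toNat - 1),
      Finsupp.single (lam + ((k : ℚ) + 1) • R.α i) 1

/-- The Demazure operator `D_i`, as a `ℤ`-linear endomorphism of the group
ring `ℤ[X]` (realized as finitely supported functions `V →₀ ℤ`). -/
noncomputable def demOp (i : Fin R.r) : (R.V →₀ ℤ) →ₗ[ℤ] (R.V →₀ ℤ) :=
  Finsupp.lsum ℤ fun lam => LinearMap.toSpanSingleton ℤ (R.V →₀ ℤ) (R.demOnBasis i lam)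

/-- The Demazure character `D_{i_1} ⋯ D_{i_k} (e^λ)`. -/
noncomputable def demChar (l : List (Fin R.r)) (lam : R.V) : R.V →₀ ℤ :=
  l.foldr (fun i p => R.demOp i p) (Finsupp.single lam 1)

/-- The axioms of a finite crystallographic root system spanning `V`, with
simple roots `α_i` and positive roots `pos`. -/
structure IsRootSystem (R : RootData) : Prop where
  finite : R.Φ.Finite
  span_top : Submodule.span ℚ R.Φ = ⊤
  ne_zero : ∀ β ∈ R.Φ, β ≠ 0
  coroot_self : ∀ β ∈ R.Φ, R.coroot β β = 2
  crystallographic : ∀ β ∈ R.Φ, ∀ γ ∈ R.Φ, ∃ m : ℤ, R.coroot β γ = (m : ℚ)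
  reflection_stable : ∀ β ∈ R.Φ, ∀ γ ∈ R.Φ, γ - R.coroot β γ • β ∈ R.Φ
  simple_mem : ∀ i, R.α i ∈ R.Φ
  indep : LinearIndependent ℚ R.α
  pos_subset : R.pos ⊆ R.Φ
  pos_or_neg : ∀ β ∈ R.Φ, (β ∈ R.pos ∧ -β ∉ R.pos) ∨ (β ∉ R.pos ∧ -β ∈ R.pos)
  simple_pos : ∀ i, R.α i ∈ R.pos
  pos_nonneg_comb : ∀ β ∈ R.pos, ∃ c : Fin R.r → ℚ, (∀ i, 0 ≤ c i) ∧ β = ∑ i, c i • R.α i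

end RootData

/-!
The support of `D_{i_1} ⋯ D_{i_k}(e^λ)` lies in the polytope `Q_l = conv {u λ}`, `u` running over
products of subwords of `l = (i_1, …, i_k)`, because `D_i (e^μ)` is supported on the segment
`[μ, s_i μ]` and `Q_{i :: l}` is `s_i`-stable. Conversely, at an extreme point `ν` of `Q_{i :: l}`
the coefficient of `D_i κ` is the coefficient of `κ` at whichever of `ν, s_i ν` pairs nonnegatively
with `α_i^∨`. That point lies in `Q_l`: if it is `s_i u λ`, then `u⁻¹ α_i` is negative by
dominance of `λ`, and the exchange condition writes `s_i u` as a shorter subword product. It is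
extreme there, hence in the support by induction. Minkowski's theorem for the polytope `Q_l`
gives the equality of convex hulls, and the subword property of the Bruhat order identifies
`Q_l` with the convex hull of `{u λ : u ≤ w}`.
-/

lemma convexHull_sdiff_singleton_of_mem {𝕜 E : Type*} [Semiring 𝕜] [PartialOrder 𝕜]
    [AddCommMonoid E] [Module 𝕜 E] {A : Set E} {a : E} (ha : a ∈ convexHull 𝕜 (A \ {a})) :
    convexHull 𝕜 (A \ {a}) = convexHull 𝕜 A := by
  refine (convexHull_mono Set.sdiff_subset).antisymm (convexHull_min (fun b hb => ?_)
    (convex_convexHull 𝕜 _))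
  rcases eq_or_ne b a with rfl | hba
  · exact ha
  · exact subset_convexHull 𝕜 _ ⟨hb, hba⟩

section FiniteMinkowski

variable {𝕜 E : Type*} [Field 𝕜] [LinearOrder 𝕜] [IsStrictOrderedRing 𝕜] [AddCommGroup E]
  [Module 𝕜 E] {A : Set E}

lemma mem_extremePoints_convexHull_of_notMem_convexHull_sdiff {a : E} (ha : a ∈ A)
    (hna : a ∉ convexHull 𝕜 (A \ {a})) : a ∈ (convexHull 𝕜 A).extremePoints 𝕜 := by
  rw [mem_extremePoints_iff_left]
  refine ⟨subset_convexHull 𝕜 A ha, fun x₁ hx₁ x₂ hx₂ hx => ?_⟩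
  rcases (A \ {a}).eq_empty_or_nonempty with hB | hB
  · have hA : A ⊆ {a} := fun b hb => by_contra fun hba => hB.subset ⟨hb, hba⟩
    simpa using convexHull_min hA (convex_singleton a) hx₁
  rw [← Set.insert_sdiff_self_of_mem ha, convexHull_insert hB, convexJoin_singleton_left] at hx₁ hx₂
  simp only [Set.mem_iUnion₂] at hx₁ hx₂
  obtain ⟨b₁, hb₁, p₁, q₁, -, hq₁, hpq₁, rfl⟩ := hx₁
  obtain ⟨b₂, hb₂, p₂, q₂, -, hq₂, hpq₂, rfl⟩ := hx₂
  obtain ⟨θ₁, θ₂, hθ₁, hθ₂, hθ, hθa⟩ := hx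
  obtain rfl : p₁ = 1 - q₁ := by linarith
  obtain rfl : p₂ = 1 - q₂ := by linarith
  obtain rfl : θ₂ = 1 - θ₁ := by linarith
  by_contra hne
  have hq₁pos : 0 < q₁ := hq₁.lt_of_ne fun h => hne (by rw [← h]; module)
  set S := θ₁ * q₁ + (1 - θ₁) * q₂
  have hS : 0 < S := by positivity
  have hSa : S • a = (θ₁ * q₁) • b₁ + ((1 - θ₁) * q₂) • b₂ := by
    linear_combination (norm := module) -hθa
  have hmem : (θ₁ * q₁ / S) • b₁ + ((1 - θ₁) * q₂ / S) • b₂ ∈ convexHull 𝕜 (A \ {a}) :=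
    convex_convexHull 𝕜 _ hb₁ hb₂ (by positivity) (by positivity)
      (by rw [← add_div, div_self hS.ne'])
  have hcomb : a = (θ₁ * q₁ / S) • b₁ + ((1 - θ₁) * q₂ / S) • b₂ := by
    calc a = S⁻¹ • (S • a) := by rw [smul_smul, inv_mul_cancel₀ hS.ne', one_smul]
      _ = _ := by rw [hSa]; module
  exact hna (hcomb ▸ hmem)

theorem Set.Finite.convexHull_extremePoints_convexHull (hA : A.Finite) :
    convexHull 𝕜 ((convexHull 𝕜 A).extremePoints 𝕜) = convexHull 𝕜 A := by
  induction hn : A.ncard using Nat.strong_induction_on generalizing A with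
  | _ n ih =>
  by_cases hred : ∃ a ∈ A, a ∈ convexHull 𝕜 (A \ {a})
  · obtain ⟨a, haA, ha⟩ := hred
    rw [← convexHull_sdiff_singleton_of_mem ha]
    exact ih _ (hn ▸ Set.ncard_sdiff_singleton_lt_of_mem haA hA) (hA.subset Set.sdiff_subset) rfl
  · exact (convexHull_min extremePoints_subset (convex_convexHull 𝕜 _)).antisymm
      (convexHull_mono fun a ha =>
        mem_extremePoints_convexHull_of_notMem_convexHull_sdiff ha fun h => hred ⟨a, ha, h⟩)

end FiniteMinkowski

lemma sub_smul_mem_segment {𝕜 E : Type*} [Field 𝕜] [LinearOrder 𝕜] [IsStrictOrderedRing 𝕜]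
    [AddCommGroup E] [Module 𝕜 E] (x v : E) {k n : 𝕜} (hk : k ∈ Set.uIcc 0 n) :
    x - k • v ∈ segment 𝕜 x (x - n • v) := by
  have hf (t : 𝕜) : AffineMap.lineMap x (x - v) t = x - t • v := by
    rw [AffineMap.lineMap_apply_module]
    module
  have := Set.mem_image_of_mem (AffineMap.lineMap x (x - v)) ((segment_eq_uIcc (0 : 𝕜) n).symm ▸ hk)
  rwa [image_segment, hf, hf, hf, zero_smul, sub_zero] at this

lemma Module.preReflection_smul_inv_smul {K M : Type*} [Field K] [AddCommGroup M] [Module K M]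
    (x : M) (f : Module.Dual K M) {c : K} (hc : c ≠ 0) :
    Module.preReflection (c • x) (c⁻¹ • f) = Module.preReflection x f := by
  ext y
  simp only [Module.preReflection_apply, LinearMap.smul_apply, smul_eq_mul, smul_smul]
  field_simp

lemma Finsupp.sum_single_one_apply_of_injective {ι α : Type*} {f : ι → α}
    (hf : Function.Injective f) (s : Finset ι) (k : ι) :
    (∑ j ∈ s, Finsupp.single (f j) (1 : ℤ)) (f k) = if k ∈ s then 1 else 0 := by
  classical
  simp only [Finsupp.finsetSum_apply, Finsupp.single_apply, hf.eq_iff, Finset.sum_ite_eq']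

namespace RootData

open Pointwise

section Reflections

variable {R : RootData}

lemma s_apply {β : R.V} (h : R.coroot β β = 2) (v : R.V) :
    R.s β v = v - R.coroot β v • β := by
  rw [s, dif_pos (LinearMap.ext fun v => Module.involutive_preReflection h v)]
  exact Module.preReflection_apply β (R.coroot β) v

lemma wordProd_cons (i : Fin R.r) (l : List (Fin R.r)) :
    R.wordProd (i :: l) = R.S i * R.wordProd l := List.prod_cons

lemma wordProd_append (l m : List (Fin R.r)) :
    R.wordProd (l ++ m) = R.wordProd l * R.wordProd m := by
  simp [wordProd]

lemma S_mem_weylGroup (i : Fin R.r) : R.S i ∈ R.weylGroup :=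
  Subgroup.subset_closure (Set.mem_range_self i)

lemma wordProd_mem_weylGroup (l : List (Fin R.r)) : R.wordProd l ∈ R.weylGroup :=
  R.weylGroup.list_prod_mem <| by
    simpa using fun i _ => S_mem_weylGroup i

lemma len_le (l : List (Fin R.r)) : R.len (R.wordProd l) ≤ l.length :=
  Nat.sInf_le ⟨l, rfl, rfl⟩

variable (hR : R.IsRootSystem)
include hR

lemma s_apply_of_mem {β : R.V} (hβ : β ∈ R.Φ) (v : R.V) :
    R.s β v = v - R.coroot β v • β :=
  s_apply (hR.coroot_self β hβ) v

lemma s_apply_self {β : R.V} (hβ : β ∈ R.Φ) : R.s β β = -β := by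
  rw [s_apply_of_mem hR hβ, hR.coroot_self β hβ]
  module

lemma s_s {β : R.V} (hβ : β ∈ R.Φ) (v : R.V) : R.s β (R.s β v) = v := by
  simp only [s_apply_of_mem hR hβ, map_sub, map_smul, hR.coroot_self β hβ]
  module

lemma s_mul_self {β : R.V} (hβ : β ∈ R.Φ) : R.s β * R.s β = 1 :=
  LinearEquiv.ext (s_s hR hβ)

lemma s_inv {β : R.V} (hβ : β ∈ R.Φ) : (R.s β)⁻¹ = R.s β :=
  inv_eq_of_mul_eq_one_right (s_mul_self hR hβ)

lemma s_apply_mem {β γ : R.V} (hβ : β ∈ R.Φ) (hγ : γ ∈ R.Φ) : R.s β γ ∈ R.Φ :=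
  (s_apply_of_mem hR hβ γ).symm ▸ hR.reflection_stable β hβ γ hγ

lemma s_mem_stabilizer {β : R.V} (hβ : β ∈ R.Φ) : R.s β ∈ MulAction.stabilizer R.Aut R.Φ :=
  MulAction.mem_stabilizer_set.2 fun v => by
    rw [LinearEquiv.smul_def]
    exact ⟨fun hv => s_s hR hβ v ▸ s_apply_mem hR hβ hv, s_apply_mem hR hβ⟩

lemma weylGroup_le_stabilizer : R.weylGroup ≤ MulAction.stabilizer R.Aut R.Φ :=
  (Subgroup.closure_le _).2 <| Set.range_subset_iff.2 fun i => s_mem_stabilizer hR (hR.simple_mem i)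

omit hR in
lemma apply_mem_iff {g : R.Aut} (hg : g ∈ MulAction.stabilizer R.Aut R.Φ) {v : R.V} :
    g v ∈ R.Φ ↔ v ∈ R.Φ :=
  MulAction.mem_stabilizer_set.1 hg v

lemma coroot_eq_of_mapsTo {β : R.V} (hβ : β ∈ R.Φ) {f : Module.Dual ℚ R.V} (hf : f β = 2)
    (hfΦ : Set.MapsTo (Module.preReflection β f) R.Φ R.Φ) : R.coroot β = f :=
  Module.Dual.eq_of_preReflection_mapsTo hR.finite hR.span_top (hR.coroot_self β hβ)
    (fun γ hγ => (Module.preReflection_apply β (R.coroot β) γ).symm ▸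
      hR.reflection_stable β hβ γ hγ) hf hfΦ

lemma coroot_apply_of_mem_stabilizer {g : R.Aut} (hg : g ∈ MulAction.stabilizer R.Aut R.Φ)
    {β : R.V} (hβ : β ∈ R.Φ) (v : R.V) : R.coroot (g β) v = R.coroot β (g⁻¹ v) := by
  suffices R.coroot (g β) = (R.coroot β).comp ((g⁻¹ : R.Aut) : R.V →ₗ[ℚ] R.V) from
    LinearMap.congr_fun this v
  refine coroot_eq_of_mapsTo hR ((apply_mem_iff hg).2 hβ) ?_ fun γ hγ => ?_
  · simpa using hR.coroot_self β hβ
  · have : Module.preReflection (g β) ((R.coroot β).comp ((g⁻¹ : R.Aut) : R.V →ₗ[ℚ] R.V)) γ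
        = g (R.s β (g⁻¹ γ)) := by
      simp [Module.preReflection_apply, s_apply_of_mem hR hβ]
    rw [this, apply_mem_iff hg, apply_mem_iff (s_mem_stabilizer hR hβ),
      apply_mem_iff (inv_mem hg)]
    exact hγ

lemma coroot_smul {β : R.V} (hβ : β ∈ R.Φ) {c : ℚ} (hc : c ≠ 0) (hcβ : c • β ∈ R.Φ) :
    R.coroot (c • β) = c⁻¹ • R.coroot β := by
  refine coroot_eq_of_mapsTo hR hcβ (by simp [hR.coroot_self β hβ, hc]) fun γ hγ => ?_
  rw [Module.preReflection_smul_inv_smul _ _ hc, Module.preReflection_apply,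
    ← s_apply_of_mem hR hβ]
  exact (apply_mem_iff (s_mem_stabilizer hR hβ)).2 hγ

lemma s_eq_conj {g : R.Aut} (hg : g ∈ MulAction.stabilizer R.Aut R.Φ) {β : R.V}
    (hβ : β ∈ R.Φ) : R.s (g β) = g * R.s β * g⁻¹ :=
  LinearEquiv.ext fun v => by
    simp [s_apply_of_mem hR ((apply_mem_iff hg).2 hβ), s_apply_of_mem hR hβ,
      coroot_apply_of_mem_stabilizer hR hg hβ]

lemma s_smul {β : R.V} (hβ : β ∈ R.Φ) {c : ℚ} (hc : c ≠ 0) (hcβ : c • β ∈ R.Φ) :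
    R.s (c • β) = R.s β :=
  LinearEquiv.ext fun v => by
    rw [s_apply_of_mem hR hcβ, coroot_smul hR hβ hc hcβ, ← Module.preReflection_apply,
      Module.preReflection_smul_inv_smul _ _ hc, Module.preReflection_apply, s_apply_of_mem hR hβ]

lemma neg_mem {β : R.V} (hβ : β ∈ R.Φ) : -β ∈ R.Φ :=
  s_apply_self hR hβ ▸ (apply_mem_iff (s_mem_stabilizer hR hβ)).2 hβ

lemma s_neg {β : R.V} (hβ : β ∈ R.Φ) : R.s (-β) = R.s β := by
  simpa using s_smul hR hβ (c := -1) (by norm_num) (by simpa using neg_mem hR hβ)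

end Reflections

section RootForm

variable {R : RootData}

noncomputable def rootForm (hΦ : R.Φ.Finite) : LinearMap.BilinForm ℚ R.V :=
  ∑ γ ∈ hΦ.toFinset, (R.coroot γ).smulRight (R.coroot γ)

lemma rootForm_apply (hΦ : R.Φ.Finite) (x y : R.V) :
    R.rootForm hΦ x y = ∑ γ ∈ hΦ.toFinset, R.coroot γ x * R.coroot γ y := by
  simp [rootForm]

variable (hR : R.IsRootSystem)
include hR

lemma rootForm_s_s {β : R.V} (hβ : β ∈ R.Φ) (x y : R.V) :
    R.rootForm hR.finite (R.s β x) (R.s β y) = R.rootForm hR.finite x y := by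
  have hsβ := s_mem_stabilizer hR hβ
  have hcoroot (γ) (hγ : γ ∈ R.Φ) (v : R.V) : R.coroot γ (R.s β v) = R.coroot (R.s β γ) v := by
    rw [coroot_apply_of_mem_stabilizer hR hsβ hγ, s_inv hR hβ]
  simp only [rootForm_apply]
  refine Finset.sum_nbij' (R.s β) (R.s β) ?_ ?_ (fun γ _ => s_s hR hβ γ) (fun γ _ => s_s hR hβ γ) ?_
  · intro γ hγ
    simpa using (apply_mem_iff hsβ).2 (by simpa using hγ)
  · intro γ hγ
    simpa using (apply_mem_iff hsβ).2 (by simpa using hγ)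
  · intro γ hγ
    rw [hcoroot γ (by simpa using hγ), hcoroot γ (by simpa using hγ)]

lemma coroot_mul_rootForm_self {β : R.V} (hβ : β ∈ R.Φ) (v : R.V) :
    R.coroot β v * R.rootForm hR.finite β β = 2 * R.rootForm hR.finite β v := by
  have h := rootForm_s_s hR hβ v β
  rw [s_apply_self hR hβ, s_apply_of_mem hR hβ] at h
  have hsymm : R.rootForm hR.finite v β = R.rootForm hR.finite β v := by
    simp only [rootForm_apply, mul_comm]
  simp only [map_sub, map_smul, map_neg, LinearMap.sub_apply, LinearMap.smul_apply,
    smul_eq_mul] at h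
  linarith

lemma rootForm_self_pos {β : R.V} (hβ : β ∈ R.Φ) : 0 < R.rootForm hR.finite β β := by
  rw [rootForm_apply]
  calc (0 : ℚ) < R.coroot β β * R.coroot β β := by rw [hR.coroot_self β hβ]; norm_num
    _ ≤ _ := Finset.single_le_sum (f := fun γ => R.coroot γ β * R.coroot γ β)
        (fun γ _ => mul_self_nonneg _) (by simpa using hβ)

lemma coroot_nonneg_of_dominant {lam : R.V} (hdom : R.Dominant lam) {β : R.V}
    (hβ : β ∈ R.pos) : 0 ≤ R.coroot β lam := by
  have hβΦ := hR.pos_subset hβ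
  have hsimple (i : Fin R.r) : 0 ≤ R.rootForm hR.finite (R.α i) lam := by
    have := coroot_mul_rootForm_self hR (hR.simple_mem i) lam
    nlinarith [hdom i, rootForm_self_pos hR (hR.simple_mem i)]
  have hform : 0 ≤ R.rootForm hR.finite β lam := by
    obtain ⟨c, hc, hβc⟩ := hR.pos_nonneg_comb β hβ
    rw [hβc, map_sum, LinearMap.sum_apply]
    exact Finset.sum_nonneg fun i _ => by
      simpa only [map_smul, LinearMap.smul_apply, smul_eq_mul] using mul_nonneg (hc i) (hsimple i)
  have := coroot_mul_rootForm_self hR hβΦ lam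
  nlinarith [rootForm_self_pos hR hβΦ]

end RootForm

section Exchange

variable {R : RootData}

lemma len_S_le (i : Fin R.r) : R.len (R.S i) ≤ 1 := by
  simpa [wordProd] using len_le [i]

variable (hR : R.IsRootSystem)
include hR

lemma S_apply (i : Fin R.r) (v : R.V) : R.S i v = v - R.coroot (R.α i) v • R.α i :=
  s_apply_of_mem hR (hR.simple_mem i) v

lemma S_mul_S_mul (i : Fin R.r) (w : R.Aut) : R.S i * (R.S i * w) = w := by
  rw [← mul_assoc, S, s_mul_self hR (hR.simple_mem i), one_mul]

lemma S_S (i : Fin R.r) (v : R.V) : R.S i (R.S i v) = v :=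
  s_s hR (hR.simple_mem i) v

lemma S_apply_of_coroot_eq {i : Fin R.r} {μ : R.V} {n : ℤ} (hn : R.coroot (R.α i) μ = n) :
    R.S i μ = μ - (n : ℚ) • R.α i := by
  rw [S_apply hR, hn]

lemma coroot_S_apply {i : Fin R.r} (v : R.V) :
    R.coroot (R.α i) (R.S i v) = -R.coroot (R.α i) v := by
  rw [S_apply hR, map_sub, map_smul, hR.coroot_self _ (hR.simple_mem i), smul_eq_mul]
  ring

lemma neg_notMem_pos {β : R.V} (hβ : β ∈ R.pos) : -β ∉ R.pos := by
  rcases hR.pos_or_neg β (hR.pos_subset hβ) with h | h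
  exacts [h.2, absurd hβ h.1]

lemma neg_mem_pos {β : R.V} (hβ : β ∈ R.Φ) (h : β ∉ R.pos) : -β ∈ R.pos := by
  rcases hR.pos_or_neg β hβ with h' | h'
  exacts [absurd h'.1 h, h'.2]

lemma eq_smul_of_S_apply_notMem_pos {j : Fin R.r} {β : R.V} (hβ : β ∈ R.pos)
    (h : R.S j β ∉ R.pos) : ∃ c : ℚ, β = c • R.α j := by
  obtain ⟨c, hc, hβc⟩ := hR.pos_nonneg_comb β hβ
  have hSβ : R.S j β ∈ R.Φ :=
    (apply_mem_iff (s_mem_stabilizer hR (hR.simple_mem j))).2 (hR.pos_subset hβ)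
  obtain ⟨d, hd, hSβd⟩ := hR.pos_nonneg_comb _ (neg_mem_pos hR hSβ h)
  -- `β + (-s_j β) = ⟨β, α_j^∨⟩ α_j`, so linear independence kills the other coordinates
  have hsum : ∑ i, (c i + d i - if i = j then R.coroot (R.α j) β else 0) • R.α i = 0 := by
    simp only [sub_smul, add_smul, Finset.sum_sub_distrib, Finset.sum_add_distrib, ite_smul,
      zero_smul, Finset.sum_ite_eq', Finset.mem_univ, if_true, ← hβc, ← hSβd, S_apply hR]
    abel
  have hcoef := Fintype.linearIndependent_iff.1 hR.indep _ hsum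
  refine ⟨c j, hβc.trans (Finset.sum_eq_single j (fun i _ hij => ?_) (by simp))⟩
  have := hcoef i
  rw [if_neg hij] at this
  rw [le_antisymm (by linarith [hd i]) (hc i), zero_smul]

lemma exists_eraseIdx_of_apply_notMem_pos (l : List (Fin R.r)) {β : R.V} (hβ : β ∈ R.pos)
    (h : R.wordProd l β ∉ R.pos) :
    ∃ p < l.length, R.wordProd l * R.s β = R.wordProd (l.eraseIdx p) := by
  induction l with
  | nil => exact absurd hβ h
  | cons j t ih =>
    by_cases ht : R.wordProd t β ∈ R.pos
    · have hstab := weylGroup_le_stabilizer hR (wordProd_mem_weylGroup t)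
      have htβ : R.wordProd t β ∈ R.Φ := (apply_mem_iff hstab).2 (hR.pos_subset hβ)
      obtain ⟨c, hc⟩ := eq_smul_of_S_apply_notMem_pos hR ht (by rwa [wordProd_cons] at h)
      have hc0 : c ≠ 0 := by
        rintro rfl
        exact hR.ne_zero _ htβ (by simpa using hc)
      have hS : R.S j = R.wordProd t * R.s β * (R.wordProd t)⁻¹ := by
        rw [← s_eq_conj hR hstab (hR.pos_subset hβ), hc,
          s_smul hR (hR.simple_mem j) hc0 (hc ▸ htβ), S]
      refine ⟨0, by simp, ?_⟩
      rw [wordProd_cons, List.eraseIdx_cons_zero, hS]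
      simp [mul_assoc, s_mul_self hR (hR.pos_subset hβ)]
    · obtain ⟨p, hp, hprod⟩ := ih ht
      refine ⟨p + 1, by simpa using hp, ?_⟩
      rw [wordProd_cons, List.eraseIdx_cons_succ, wordProd_cons, mul_assoc, hprod]

lemma exists_word {w : R.Aut} (hw : w ∈ R.weylGroup) : ∃ l, R.wordProd l = w := by
  induction hw using Subgroup.closure_induction'' with
  | mem x hx =>
    obtain ⟨i, rfl⟩ := hx
    exact ⟨[i], by simp [wordProd]⟩
  | inv_mem x hx =>
    obtain ⟨i, rfl⟩ := hx
    exact ⟨[i], by simp [wordProd, S, s_inv hR (hR.simple_mem i)]⟩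
  | one => exact ⟨[], rfl⟩
  | mul x y _ _ hx hy =>
    obtain ⟨lx, rfl⟩ := hx
    obtain ⟨ly, rfl⟩ := hy
    exact ⟨lx ++ ly, wordProd_append lx ly⟩

lemma exists_reduced_word {w : R.Aut} (hw : w ∈ R.weylGroup) :
    ∃ l, R.Reduced l ∧ R.wordProd l = w := by
  obtain ⟨l, hl⟩ := exists_word hR hw
  obtain ⟨l', hl', hl'w⟩ := Nat.sInf_mem (⟨l.length, l, rfl, hl⟩ :
    {n | ∃ l : List (Fin R.r), l.length = n ∧ R.wordProd l = w}.Nonempty)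
  exact ⟨l', by rw [Reduced, hl'w, len, hl'], hl'w⟩

lemma len_mul_le {u v : R.Aut} (hu : u ∈ R.weylGroup) (hv : v ∈ R.weylGroup) :
    R.len (u * v) ≤ R.len u + R.len v := by
  obtain ⟨lu, hlu, rfl⟩ := exists_reduced_word hR hu
  obtain ⟨lv, hlv, rfl⟩ := exists_reduced_word hR hv
  unfold Reduced at hlu hlv
  simpa [hlu, hlv, wordProd_append] using len_le (lu ++ lv)

lemma len_S_mul_le {w : R.Aut} (hw : w ∈ R.weylGroup) (i : Fin R.r) :
    R.len (R.S i * w) ≤ R.len w + 1 := by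
  linarith [len_mul_le hR (S_mem_weylGroup i) hw, len_S_le i]

lemma len_mul_s_lt {w : R.Aut} (hw : w ∈ R.weylGroup) {β : R.V} (hβ : β ∈ R.pos)
    (h : w β ∉ R.pos) : R.len (w * R.s β) < R.len w := by
  obtain ⟨l, hl, rfl⟩ := exists_reduced_word hR hw
  obtain ⟨p, hp, hprod⟩ := exists_eraseIdx_of_apply_notMem_pos hR l hβ h
  have := len_le (l.eraseIdx p)
  rw [List.length_eraseIdx_of_lt hp, ← hprod] at this
  rw [hl]
  omega

lemma len_lt_len_mul_s {w : R.Aut} {β : R.V} (hβ : β ∈ R.pos)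
    (hws : w * R.s β ∈ R.weylGroup) (h : w β ∈ R.pos) : R.len w < R.len (w * R.s β) := by
  have hβΦ := hR.pos_subset hβ
  have := len_mul_s_lt hR hws hβ (by
    rw [LinearEquiv.mul_apply, s_apply_self hR hβΦ, map_neg]
    exact neg_notMem_pos hR h)
  rwa [mul_assoc, s_mul_self hR hβΦ, mul_one] at this

lemma inv_apply_simple_mem {w : R.Aut} (hw : w ∈ R.weylGroup) (i : Fin R.r) :
    w⁻¹ (R.α i) ∈ R.Φ :=
  (apply_mem_iff (inv_mem (weylGroup_le_stabilizer hR hw))).2 (hR.simple_mem i)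

lemma S_mul_eq_mul_s {w : R.Aut} (hw : w ∈ R.weylGroup) (i : Fin R.r) :
    R.S i * w = w * R.s (w⁻¹ (R.α i)) := by
  have := s_eq_conj hR (weylGroup_le_stabilizer hR hw) (inv_apply_simple_mem hR hw i)
  rw [← LinearEquiv.mul_apply, mul_inv_cancel, LinearEquiv.coe_one, id] at this
  rw [S, this, inv_mul_cancel_right]

lemma len_lt_len_S_mul_or {w : R.Aut} (hw : w ∈ R.weylGroup) (i : Fin R.r) :
    R.len w < R.len (R.S i * w) ∨ R.len (R.S i * w) < R.len w := by
  have hSw := mul_mem (S_mem_weylGroup i) hw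
  have hβ := inv_apply_simple_mem hR hw i
  have hwβ : w (w⁻¹ (R.α i)) = R.α i := by simp
  rw [S_mul_eq_mul_s hR hw i] at hSw ⊢
  by_cases hpos : w⁻¹ (R.α i) ∈ R.pos
  · exact .inl (len_lt_len_mul_s hR hpos hSw (by rw [hwβ]; exact hR.simple_pos i))
  · refine .inr (s_neg hR hβ ▸ len_mul_s_lt hR hw (neg_mem_pos hR hβ hpos) ?_)
    rw [map_neg, hwβ]
    exact neg_notMem_pos hR (hR.simple_pos i)

lemma exists_S_mul_eq_eraseIdx (l : List (Fin R.r)) {i : Fin R.r}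
    (h : (R.wordProd l)⁻¹ (R.α i) ∉ R.pos) :
    ∃ p, R.S i * R.wordProd l = R.wordProd (l.eraseIdx p) := by
  have hw := wordProd_mem_weylGroup (R := R) l
  have hβ := inv_apply_simple_mem hR hw i
  rw [S_mul_eq_mul_s hR hw, ← s_neg hR hβ]
  obtain ⟨p, -, hp⟩ := exists_eraseIdx_of_apply_notMem_pos hR l (neg_mem_pos hR hβ h) (by
    rw [map_neg, ← LinearEquiv.mul_apply, mul_inv_cancel, LinearEquiv.coe_one, id]
    exact neg_notMem_pos hR (hR.simple_pos i))
  exact ⟨p, hp⟩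

end Exchange

section Bruhat

/-- The chain form of the Bruhat order; the subword property identifies it with `BruhatLE`. -/
def BruhatStep (R : RootData) (x y : R.Aut) : Prop :=
  x ∈ R.weylGroup ∧ y ∈ R.weylGroup ∧ (∃ β ∈ R.Φ, y = x * R.s β) ∧ R.len x < R.len y

def BruhatChain (R : RootData) : R.Aut → R.Aut → Prop :=
  Relation.ReflTransGen R.BruhatStep

def SubwordPropertyBelow (R : RootData) (n : ℕ) : Prop :=
  ∀ l, R.Reduced l → l.length < n →
    ∀ l', l'.Sublist l → R.BruhatChain (R.wordProd l') (R.wordProd l)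

variable {R : RootData}

lemma SubwordPropertyBelow.mono {m n : ℕ} (h : R.SubwordPropertyBelow n) (hmn : m ≤ n) :
    R.SubwordPropertyBelow m :=
  fun l hl hlm => h l hl (hlm.trans_le hmn)

variable (hR : R.IsRootSystem)
include hR

lemma Reduced.of_cons {j : Fin R.r} {l : List (Fin R.r)} (h : R.Reduced (j :: l)) :
    R.Reduced l := by
  have h' : R.len (R.S j * R.wordProd l) = l.length + 1 := by rw [← wordProd_cons]; exact h
  have := len_S_mul_le hR (wordProd_mem_weylGroup l) j
  exact le_antisymm (len_le l) (by omega)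

lemma exists_pos_s_eq {β : R.V} (hβ : β ∈ R.Φ) : ∃ δ ∈ R.pos, R.s δ = R.s β := by
  by_cases h : β ∈ R.pos
  exacts [⟨β, h, rfl⟩, ⟨-β, neg_mem_pos hR hβ h, s_neg hR hβ⟩]

lemma bruhatStep_S_mul {w : R.Aut} (hw : w ∈ R.weylGroup) {i : Fin R.r}
    (h : R.len w < R.len (R.S i * w)) : R.BruhatStep w (R.S i * w) :=
  ⟨hw, mul_mem (S_mem_weylGroup i) hw, ⟨_, inv_apply_simple_mem hR hw i, S_mul_eq_mul_s hR hw i⟩, h⟩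

lemma exists_sublist_of_bruhatChain {u w : R.Aut} (huw : R.BruhatChain u w)
    {l : List (Fin R.r)} (hl : R.wordProd l = w) : ∃ l', l'.Sublist l ∧ R.wordProd l' = u := by
  induction huw generalizing l with
  | refl => exact ⟨l, List.Sublist.refl l, hl⟩
  | tail _ hxw ih =>
    obtain ⟨hx, hw, ⟨β, hβ, rfl⟩, hlen⟩ := hxw
    obtain ⟨δ, hδ, hsδ⟩ := exists_pos_s_eq hR hβ
    have hlδ : R.wordProd l δ ∉ R.pos := fun hpos => by
      have := len_lt_len_mul_s hR hδ
        (by rw [hsδ, hl, mul_assoc, s_mul_self hR hβ, mul_one]; exact hx) hpos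
      rw [hl, hsδ, mul_assoc, s_mul_self hR hβ, mul_one] at this
      omega
    obtain ⟨p, -, hp⟩ := exists_eraseIdx_of_apply_notMem_pos hR l hδ hlδ
    obtain ⟨l', hl', rfl⟩ := ih (l := l.eraseIdx p)
      (by rw [← hp, hl, hsδ, mul_assoc, s_mul_self hR hβ, mul_one])
    exact ⟨l', hl'.trans (List.eraseIdx_sublist l p), rfl⟩

lemma bruhatChain_S_mul_of_len_S_mul_lt {u x : R.Aut} {i : Fin R.r}
    (hB : R.SubwordPropertyBelow (R.len x + 1)) (hx : x ∈ R.weylGroup)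
    (hux : R.BruhatChain u x) (hxi : R.len (R.S i * x) < R.len x) :
    R.BruhatChain (R.S i * u) x := by
  obtain ⟨m, hm, hmx⟩ := exists_reduced_word hR (mul_mem (S_mem_weylGroup i) hx)
  have hprod : R.wordProd (i :: m) = x := by rw [wordProd_cons, hmx, S_mul_S_mul hR]
  have hm' : m.length = R.len (R.S i * x) := by rw [← hmx]; exact hm.symm
  have hlen : R.len x = m.length + 1 := by
    have := len_le (i :: m)
    rw [hprod, List.length_cons] at this
    omega
  have hred : R.Reduced (i :: m) := by rw [Reduced, hprod, hlen, List.length_cons]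
  obtain ⟨c, hc, rfl⟩ := exists_sublist_of_bruhatChain hR hux hprod
  rcases List.sublist_cons_iff.1 hc with hc | ⟨c', rfl, hc'⟩
  · simpa [hprod, wordProd_cons] using hB _ hred (by simp; omega) _ (hc.cons_cons i)
  · rw [wordProd_cons, S_mul_S_mul hR]
    refine (hB m hm (by omega) c' hc').tail ?_
    have := bruhatStep_S_mul hR (mul_mem (S_mem_weylGroup i) hx) (by rwa [S_mul_S_mul hR])
    rwa [S_mul_S_mul hR, ← hmx] at this

lemma bruhatChain_S_mul_S_mul {u w : R.Aut} {i : Fin R.r}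
    (hB : R.SubwordPropertyBelow (R.len w)) (hw : w ∈ R.weylGroup) (huw : R.BruhatChain u w)
    (hwi : R.len w < R.len (R.S i * w)) : R.BruhatChain (R.S i * u) (R.S i * w) := by
  induction huw with
  | refl => exact .refl
  | tail hux hxw ih =>
    obtain ⟨hx, -, ⟨β, hβ, rfl⟩, hlen⟩ := hxw
    rcases len_lt_len_S_mul_or hR hx i with hxi | hxi
    · refine (ih (hB.mono hlen.le) hx hxi).tail ⟨mul_mem (S_mem_weylGroup i) hx,
        mul_mem (S_mem_weylGroup i) hw, ⟨β, hβ, (mul_assoc _ _ _).symm⟩, ?_⟩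
      have := len_S_mul_le hR hx i
      omega
    · exact ((bruhatChain_S_mul_of_len_S_mul_lt hR (hB.mono hlen) hx hux hxi).tail
        ⟨hx, hw, ⟨β, hβ, rfl⟩, hlen⟩).tail (bruhatStep_S_mul hR hw hwi)

lemma subwordPropertyBelow (n : ℕ) : R.SubwordPropertyBelow n := by
  induction n with
  | zero => exact fun l _ hl => absurd hl (Nat.not_lt_zero _)
  | succ n ih =>
    rintro (_ | ⟨j, b⟩)
    · intro _ _ l' hl'
      rw [List.sublist_nil.1 hl']
      exact .refl
    intro hl hlen l' hl'
    have hb := hl.of_cons hR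
    have hbj : R.len (R.wordProd b) < R.len (R.S j * R.wordProd b) := by
      have h : R.len (R.wordProd (j :: b)) = b.length + 1 := hl
      rw [wordProd_cons] at h
      rw [hb, h]
      omega
    have hbn : b.length < n := by simpa using hlen
    have hbW := wordProd_mem_weylGroup (R := R) b
    rcases List.sublist_cons_iff.1 hl' with hl' | ⟨b', rfl, hb'⟩
    · rw [wordProd_cons]
      exact (ih b hb hbn l' hl').tail (bruhatStep_S_mul hR hbW hbj)
    · rw [wordProd_cons, wordProd_cons]
      exact bruhatChain_S_mul_S_mul hR (ih.mono (by rw [hb]; omega)) hbW (ih b hb hbn b' hb') hbj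

lemma exists_sublist_of_bruhatLE {u w : R.Aut} (huw : R.BruhatLE u w) {l : List (Fin R.r)}
    (hlw : R.wordProd l = w) : ∃ l', l'.Sublist l ∧ R.wordProd l' = u := by
  obtain ⟨m, hm, rfl, m', hm', rfl⟩ := huw
  exact exists_sublist_of_bruhatChain hR
    (subwordPropertyBelow hR (m.length + 1) m hm m.length.lt_succ_self m' hm') hlw

end Bruhat

section Demazure

variable {R : RootData} {i : Fin R.r} {μ ν : R.V} {n : ℤ}

lemma demOnBasis_apply_sub_smul (hα : R.α i ≠ 0) (hn : R.coroot (R.α i) μ = n) (k : ℤ) :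
    R.demOnBasis i μ (μ - (k : ℚ) • R.α i) =
      if 0 ≤ k ∧ k ≤ n then 1 else if n < k ∧ k < 0 then -1 else 0 := by
  have hg : Function.Injective fun k : ℤ => μ - (k : ℚ) • R.α i := fun a b h => by
    simpa using smul_left_injective ℚ hα (sub_right_injective h)
  rw [demOnBasis, hn, Int.floor_intCast]
  by_cases h0 : 0 ≤ n
  · have hsum : ∑ j ∈ Finset.range (n.toNat + 1), Finsupp.single (μ - (j : ℚ) • R.α i) (1 : ℤ) =
        ∑ j ∈ (Finset.range (n.toNat + 1)).image (fun j : ℕ => (j : ℤ)),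
          Finsupp.single (μ - ((j : ℤ) : ℚ) • R.α i) 1 := by
      rw [Finset.sum_image fun a _ b _ h => by simpa using h]
      simp
    have hmem : k ∈ (Finset.range (n.toNat + 1)).image (fun j : ℕ => (j : ℤ)) ↔
        0 ≤ k ∧ k ≤ n := by
      simp only [Finset.mem_image, Finset.mem_range]
      exact ⟨by rintro ⟨j, hj, rfl⟩; omega, fun hk => ⟨k.toNat, by omega, by omega⟩⟩
    rw [if_pos h0, hsum, Finsupp.sum_single_one_apply_of_injective hg]
    simp only [hmem]
    split_ifs <;> omega
  rw [if_neg h0]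
  by_cases hn1 : n = -1
  · rw [if_pos hn1, if_neg (by omega), if_neg (by omega), Finsupp.coe_zero, Pi.zero_apply]
  have hsum : ∑ j ∈ Finset.range ((-n).toNat - 1), Finsupp.single (μ + ((j : ℚ) + 1) • R.α i)
      (1 : ℤ) = ∑ j ∈ (Finset.range ((-n).toNat - 1)).image (fun j : ℕ => -(j : ℤ) - 1),
        Finsupp.single (μ - ((j : ℤ) : ℚ) • R.α i) 1 := by
    rw [Finset.sum_image fun a _ b _ h => by simpa using h]
    refine Finset.sum_congr rfl fun j _ => ?_
    congr 1
    push_cast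
    module
  have hmem : k ∈ (Finset.range ((-n).toNat - 1)).image (fun j : ℕ => -(j : ℤ) - 1) ↔
      n < k ∧ k < 0 := by
    simp only [Finset.mem_image, Finset.mem_range]
    exact ⟨by rintro ⟨j, hj, rfl⟩; omega, fun hk => ⟨(-k - 1).toNat, by omega, by omega⟩⟩
  rw [if_neg hn1, hsum, Finsupp.neg_apply, Finsupp.sum_single_one_apply_of_injective hg]
  simp only [hmem]
  split_ifs <;> omega

lemma exists_eq_sub_smul_of_mem_support_demOnBasis (hν : ν ∈ (R.demOnBasis i μ).support) :
    ∃ k : ℤ, ν = μ - (k : ℚ) • R.α i := by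
  unfold demOnBasis at hν
  split_ifs at hν
  · obtain ⟨j, -, hj⟩ := Finset.mem_biUnion.1 (Finsupp.support_finsetSum hν)
    exact ⟨j, by simpa using Finsupp.support_single_subset hj⟩
  · simp at hν
  · rw [Finsupp.support_neg] at hν
    obtain ⟨j, -, hj⟩ := Finset.mem_biUnion.1 (Finsupp.support_finsetSum hν)
    refine ⟨-j - 1, ?_⟩
    rw [Finset.mem_singleton.1 (Finsupp.support_single_subset hj)]
    push_cast
    module

lemma demOp_apply (κ : R.V →₀ ℤ) (ν : R.V) :
    R.demOp i κ ν = κ.sum fun μ c => c * R.demOnBasis i μ ν := by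
  simp [demOp, Finsupp.sum_apply]

lemma exists_mem_support_of_mem_support_demOp {κ : R.V →₀ ℤ}
    (hν : ν ∈ (R.demOp i κ).support) : ∃ μ ∈ κ.support, ν ∈ (R.demOnBasis i μ).support := by
  by_contra! h
  rw [Finsupp.mem_support_iff, demOp_apply] at hν
  exact hν (Finset.sum_eq_zero fun μ hμ => by simp [Finsupp.notMem_support_iff.1 (h μ hμ)])

variable (hR : R.IsRootSystem)
include hR

lemma IsWeight.sub_smul_simple (hμ : R.IsWeight μ) (k : ℤ) :
    R.IsWeight (μ - (k : ℚ) • R.α i) := by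
  intro β hβ
  obtain ⟨a, ha⟩ := hμ β hβ
  obtain ⟨b, hb⟩ := hR.crystallographic β hβ _ (hR.simple_mem i)
  exact ⟨a - k * b, by rw [map_sub, map_smul, ha, hb, smul_eq_mul]; push_cast; ring⟩

lemma IsWeight.apply_of_mem_weylGroup (hμ : R.IsWeight μ) {u : R.Aut} (hu : u ∈ R.weylGroup) :
    R.IsWeight (u μ) := by
  intro β hβ
  have hu' := weylGroup_le_stabilizer hR (inv_mem hu)
  have := coroot_apply_of_mem_stabilizer hR hu' hβ μ
  rw [inv_inv] at this
  exact this ▸ hμ _ ((apply_mem_iff hu').2 hβ)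

lemma mem_segment_of_mem_support_demOnBasis (hn : R.coroot (R.α i) μ = n)
    (hν : ν ∈ (R.demOnBasis i μ).support) : ν ∈ segment ℚ μ (R.S i μ) := by
  obtain ⟨k, rfl⟩ := exists_eq_sub_smul_of_mem_support_demOnBasis hν
  rw [Finsupp.mem_support_iff, demOnBasis_apply_sub_smul (hR.ne_zero _ (hR.simple_mem i)) hn] at hν
  rw [S_apply_of_coroot_eq hR hn]
  refine sub_smul_mem_segment _ _ (Set.mem_uIcc.2 ?_)
  split_ifs at hν with h₁ h₂
  · exact .inl ⟨by exact_mod_cast h₁.1, by exact_mod_cast h₁.2⟩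
  · exact .inr ⟨by exact_mod_cast h₂.1.le, by exact_mod_cast h₂.2.le⟩
  · exact absurd rfl hν

lemma demOnBasis_apply_of_eq_or (hn : R.coroot (R.α i) μ = n) (hν : ν = μ ∨ ν = R.S i μ) :
    R.demOnBasis i μ ν = if 0 ≤ n then 1 else 0 := by
  have hα := hR.ne_zero _ (hR.simple_mem i)
  rcases hν with rfl | rfl
  · have := demOnBasis_apply_sub_smul hα hn 0
    rw [Int.cast_zero, zero_smul, sub_zero] at this
    rw [this]
    split_ifs <;> omega
  · rw [S_apply_of_coroot_eq hR hn, demOnBasis_apply_sub_smul hα hn n]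
    split_ifs <;> omega

/-- Since `D_i (e^{μ'})` is supported on `[μ', s_i μ']`, only `e^μ` and `e^{s_i μ}` can contribute
at the extreme point `ν`, and `e^{s_i μ}` contributes `0` because `⟨s_i μ, α_i^∨⟩ < 0`. -/
lemma demOp_apply_of_mem_extremePoints {κ : R.V →₀ ℤ} {Q : Set R.V} (hκQ : ↑κ.support ⊆ Q)
    (hQ : Set.MapsTo (R.S i) Q Q) (hκ : ∀ μ ∈ κ.support, R.IsWeight μ)
    (hn : R.coroot (R.α i) μ = n) (hn0 : 0 ≤ n) (hν : ν ∈ Q.extremePoints ℚ)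
    (hνμ : ν = μ ∨ ν = R.S i μ) : R.demOp i κ ν = κ μ := by
  rw [demOp_apply, Finsupp.sum_eq_single μ ?_ (by simp), demOnBasis_apply_of_eq_or hR hn hνμ,
    if_pos hn0, mul_one]
  intro μ' hκμ' hne
  have hμ' := Finsupp.mem_support_iff.2 hκμ'
  obtain ⟨n', hn'⟩ := hκ μ' hμ' _ (hR.simple_mem i)
  by_contra h
  have hν' : ν ∈ (R.demOnBasis i μ').support :=
    Finsupp.mem_support_iff.2 (right_ne_zero_of_mul h)
  have hνμ' : ν = μ' ∨ ν = R.S i μ' := ((mem_extremePoints_iff_forall_segment.1 hν).2 _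
    (hκQ hμ') _ (hQ (hκQ hμ')) (mem_segment_of_mem_support_demOnBasis hR hn' hν')).imp
    Eq.symm Eq.symm
  have hμ' : μ' = R.S i μ := by
    rcases hνμ with rfl | rfl <;> rcases hνμ' with h | h
    · exact absurd h.symm hne
    · rw [h, S_S hR]
    · exact h.symm
    · exact absurd (by rw [← S_S hR i μ', ← h, S_S hR]) hne
  have hnn' : n' = -n := by
    have := coroot_S_apply hR (i := i) μ
    rw [← hμ', hn', hn] at this
    exact_mod_cast this
  have hn0' : n ≠ 0 := by
    rintro rfl
    exact hne (by rw [hμ', S_apply_of_coroot_eq hR hn, Int.cast_zero, zero_smul, sub_zero])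
  rw [Finsupp.mem_support_iff, demOnBasis_apply_of_eq_or hR hn' hνμ', if_neg (by omega)] at hν'
  exact hν' rfl

end Demazure

section Polytope

def subwordWeights (R : RootData) (lam : R.V) (l : List (Fin R.r)) : Set R.V :=
  {v | ∃ m, m.Sublist l ∧ v = R.wordProd m lam}

variable {R : RootData} {lam : R.V}

lemma subwordWeights_finite (l : List (Fin R.r)) : (R.subwordWeights lam l).Finite :=
  (l.sublists.map fun m => R.wordProd m lam).finite_toSet.subset fun _ ⟨m, hm, hv⟩ =>
    List.mem_map.2 ⟨m, List.mem_sublists.2 hm, hv.symm⟩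

lemma subwordWeights_nil : R.subwordWeights lam [] = {lam} := by
  ext v
  simp [subwordWeights, wordProd]

lemma subwordWeights_cons (i : Fin R.r) (l : List (Fin R.r)) :
    R.subwordWeights lam (i :: l) = R.subwordWeights lam l ∪ R.S i '' R.subwordWeights lam l := by
  ext v
  simp only [subwordWeights, List.sublist_cons_iff, Set.mem_union, Set.mem_image,
    Set.mem_ofPred_eq]
  constructor
  · rintro ⟨m, hm | ⟨m, rfl, hm⟩, rfl⟩
    exacts [.inl ⟨m, hm, rfl⟩, .inr ⟨_, ⟨m, hm, rfl⟩, by rw [wordProd_cons]; rfl⟩]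
  · rintro (⟨m, hm, rfl⟩ | ⟨_, ⟨m, hm, rfl⟩, rfl⟩)
    exacts [⟨m, .inl hm, rfl⟩, ⟨i :: m, .inr ⟨m, rfl, hm⟩, by rw [wordProd_cons]; rfl⟩]

lemma convexHull_subwordWeights_subset_cons (i : Fin R.r) (l : List (Fin R.r)) :
    convexHull ℚ (R.subwordWeights lam l) ⊆ convexHull ℚ (R.subwordWeights lam (i :: l)) :=
  convexHull_mono (subwordWeights_cons i l ▸ Set.subset_union_left)

variable (hR : R.IsRootSystem)
include hR

lemma isWeight_of_mem_subwordWeights (hwt : R.IsWeight lam) {l : List (Fin R.r)} {v : R.V}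
    (hv : v ∈ R.subwordWeights lam l) : R.IsWeight v := by
  obtain ⟨m, -, rfl⟩ := hv
  exact hwt.apply_of_mem_weylGroup hR (wordProd_mem_weylGroup m)

lemma S_image_convexHull_subwordWeights_cons (i : Fin R.r) (l : List (Fin R.r)) :
    R.S i '' convexHull ℚ (R.subwordWeights lam (i :: l)) =
      convexHull ℚ (R.subwordWeights lam (i :: l)) := by
  have hP : R.S i '' R.subwordWeights lam (i :: l) = R.subwordWeights lam (i :: l) := by
    rw [subwordWeights_cons, Set.image_union, Set.image_image]
    simp only [S_S hR, Set.image_id', Set.union_comm]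
  simpa [hP] using (R.S i).toLinearMap.image_convexHull (R.subwordWeights lam (i :: l))

lemma mapsTo_S_convexHull_subwordWeights_cons (i : Fin R.r) (l : List (Fin R.r)) :
    Set.MapsTo (R.S i) (convexHull ℚ (R.subwordWeights lam (i :: l)))
      (convexHull ℚ (R.subwordWeights lam (i :: l))) :=
  Set.mapsTo_iff_image_subset.2 (S_image_convexHull_subwordWeights_cons hR i l).subset

lemma mem_subwordWeights_of_coroot_nonneg (hdom : R.Dominant lam) {i : Fin R.r}
    {l : List (Fin R.r)} {v : R.V} (hv : v ∈ R.subwordWeights lam (i :: l))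
    (h : 0 ≤ R.coroot (R.α i) v) : v ∈ R.subwordWeights lam l := by
  rw [subwordWeights_cons] at hv
  rcases hv with hv | ⟨_, ⟨m, hm, rfl⟩, rfl⟩
  · exact hv
  by_cases hpos : (R.wordProd m)⁻¹ (R.α i) ∈ R.pos
  · -- then `⟨u λ, α_i^∨⟩ = ⟨λ, (u⁻¹ α_i)^∨⟩ ≥ 0`, while `h` says it is `≤ 0`, so `s_i` fixes `u λ`
    have hu := weylGroup_le_stabilizer hR (inv_mem (wordProd_mem_weylGroup (R := R) m))
    have h₁ := coroot_apply_of_mem_stabilizer hR hu (hR.simple_mem i) lam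
    rw [inv_inv] at h₁
    have h₀ : R.coroot (R.α i) (R.wordProd m lam) = 0 := by
      linarith [coroot_nonneg_of_dominant hR hdom hpos, coroot_S_apply hR (i := i)
        (R.wordProd m lam)]
    rw [S_apply hR, h₀, zero_smul, sub_zero]
    exact ⟨m, hm, rfl⟩
  · obtain ⟨p, hp⟩ := exists_S_mul_eq_eraseIdx hR m hpos
    exact ⟨m.eraseIdx p, (List.eraseIdx_sublist m p).trans hm, by rw [← hp]; rfl⟩

lemma convexHull_subwordWeights_eq_demPolytope {l : List (Fin R.r)} (hl : R.Reduced l) :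
    convexHull ℚ (R.subwordWeights lam l) = R.demPolytope lam (R.wordProd l) := by
  refine congrArg _ (Set.ext fun v => ⟨?_, ?_⟩)
  · rintro ⟨m, hm, rfl⟩
    exact ⟨R.wordProd m, wordProd_mem_weylGroup m, ⟨l, hl, rfl, m, hm, rfl⟩, rfl⟩
  · rintro ⟨u, -, hu, rfl⟩
    obtain ⟨m, hm, rfl⟩ := exists_sublist_of_bruhatLE hR hu rfl
    exact ⟨m, hm, rfl⟩

end Polytope

section Support

variable {R : RootData} (hR : R.IsRootSystem) {lam : R.V} {i : Fin R.r} {κ : R.V →₀ ℤ}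
include hR

lemma support_demOp_subset {Q : Set R.V} (hQc : Convex ℚ Q) (hQ : Set.MapsTo (R.S i) Q Q)
    (hκQ : ↑κ.support ⊆ Q) (hκ : ∀ μ ∈ κ.support, R.IsWeight μ) :
    ↑(R.demOp i κ).support ⊆ Q := by
  intro ν hν
  obtain ⟨μ, hμ, hνμ⟩ := exists_mem_support_of_mem_support_demOp hν
  obtain ⟨n, hn⟩ := hκ μ hμ _ (hR.simple_mem i)
  exact hQc.segment_subset (hκQ hμ) (hQ (hκQ hμ)) (mem_segment_of_mem_support_demOnBasis hR hn hνμ)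

lemma isWeight_of_mem_support_demOp (hκ : ∀ μ ∈ κ.support, R.IsWeight μ) {ν : R.V}
    (hν : ν ∈ (R.demOp i κ).support) : R.IsWeight ν := by
  obtain ⟨μ, hμ, hνμ⟩ := exists_mem_support_of_mem_support_demOp hν
  obtain ⟨k, rfl⟩ := exists_eq_sub_smul_of_mem_support_demOnBasis hνμ
  exact (hκ μ hμ).sub_smul_simple hR k

lemma extremePoints_subset_support_demOp (hwt : R.IsWeight lam) (hdom : R.Dominant lam)
    {l : List (Fin R.r)} (hκl : ↑κ.support ⊆ convexHull ℚ (R.subwordWeights lam l))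
    (hlκ : (convexHull ℚ (R.subwordWeights lam l)).extremePoints ℚ ⊆ ↑κ.support)
    (hκ : ∀ μ ∈ κ.support, R.IsWeight μ) :
    (convexHull ℚ (R.subwordWeights lam (i :: l))).extremePoints ℚ ⊆ ↑(R.demOp i κ).support := by
  intro ν hν
  set Q := convexHull ℚ (R.subwordWeights lam (i :: l))
  have hQ : R.S i '' Q = Q := S_image_convexHull_subwordWeights_cons hR i l
  have hlQ : convexHull ℚ (R.subwordWeights lam l) ⊆ Q :=
    convexHull_subwordWeights_subset_cons i l
  obtain ⟨μ, hνμ, hμ⟩ : ∃ μ, (ν = μ ∨ ν = R.S i μ) ∧ 0 ≤ R.coroot (R.α i) μ := by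
    rcases le_total 0 (R.coroot (R.α i) ν) with h | h
    · exact ⟨ν, .inl rfl, h⟩
    · exact ⟨R.S i ν, .inr (S_S hR i ν).symm, by rw [coroot_S_apply hR]; linarith⟩
  have hμQ : μ ∈ Q.extremePoints ℚ := by
    rcases hνμ with rfl | rfl
    · exact hν
    · rw [← S_S hR i μ, ← hQ, ← image_extremePoints]
      exact Set.mem_image_of_mem _ hν
  have hμl : μ ∈ R.subwordWeights lam l :=
    mem_subwordWeights_of_coroot_nonneg hR hdom (extremePoints_convexHull_subset hμQ) hμ
  have hμκ : μ ∈ κ.support :=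
    hlκ (inter_extremePoints_subset_extremePoints_of_subset hlQ ⟨subset_convexHull ℚ _ hμl, hμQ⟩)
  obtain ⟨n, hn⟩ := isWeight_of_mem_subwordWeights hR hwt hμl _ (hR.simple_mem i)
  rw [Finset.mem_coe, Finsupp.mem_support_iff, demOp_apply_of_mem_extremePoints hR (hκl.trans hlQ)
    (mapsTo_S_convexHull_subwordWeights_cons hR i l) hκ hn (by exact_mod_cast hn ▸ hμ) hν hνμ]
  exact Finsupp.mem_support_iff.1 hμκ

theorem demChar_support (hwt : R.IsWeight lam) (hdom : R.Dominant lam) (l : List (Fin R.r)) :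
    ↑(R.demChar l lam).support ⊆ convexHull ℚ (R.subwordWeights lam l) ∧
      (convexHull ℚ (R.subwordWeights lam l)).extremePoints ℚ ⊆ ↑(R.demChar l lam).support ∧
      ∀ μ ∈ (R.demChar l lam).support, R.IsWeight μ := by
  induction l with
  | nil =>
    have h : (R.demChar [] lam).support = {lam} := Finsupp.support_single _ one_ne_zero
    simp [h, subwordWeights_nil, hwt]
  | cons i l ih =>
    obtain ⟨hκl, hlκ, hκ⟩ := ih
    exact ⟨support_demOp_subset hR (convex_convexHull ℚ _)
      (mapsTo_S_convexHull_subwordWeights_cons hR i l)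
      (hκl.trans (convexHull_subwordWeights_subset_cons i l)) hκ,
      extremePoints_subset_support_demOp hR hwt hdom hκl hlκ hκ,
      fun μ hμ => isWeight_of_mem_support_demOp hR hκ hμ⟩

end Support

end RootData

theorem statement0 (R : RootData) (hR : R.IsRootSystem)
    (lam : R.V) (hwt : R.IsWeight lam) (hdom : R.Dominant lam)
    (l : List (Fin R.r)) (hl : R.Reduced l) :
    convexHull ℚ (↑(R.demChar l lam).support : Set R.V) =
      convexHull ℚ {m | ∃ u : R.Aut, u ∈ R.weylGroup ∧
        R.BruhatLE u (R.wordProd l) ∧ m = u lam} := by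
  obtain ⟨hsupp, hext, -⟩ := RootData.demChar_support hR hwt hdom l
  refine le_antisymm ?_ ?_ |>.trans (RootData.convexHull_subwordWeights_eq_demPolytope hR hl)
  · exact convexHull_min hsupp (convex_convexHull ℚ _)
  · rw [← (RootData.subwordWeights_finite l).convexHull_extremePoints_convexHull]
    exact convexHull_mono hext
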